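/- (Corollary 1) If Y is an everywhere dense subspace of a compact Hausdorff space X, then the set {μ ∈ I(X) : supp μ ⊆ Y} of idempotent probability measures on X whose support is contained in Y is everywhere dense in I(X). -/

import Mathlib

/-- `μ : C(X, ℝ) → ℝ` is an idempotent probability measure. -/
def IsIPM {X : Type*} [TopologicalSpace X] (μ : C(X, ℝ) → ℝ) : Prop :=
  (∀ c : ℝ, μ (ContinuousMap.const X c) = c) ∧
  (∀ (φ : C(X, ℝ)) (c : ℝ), μ (φ + ContinuousMap.const X c) = μ φ + c) ∧
  (∀ φ ψ : C(X, ℝ), μ (φ ⊔ ψ) = max (μ φ) (μ ψ))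

/-- `μ` is supported on the set `F`. -/
def IPMSupportedOn {X : Type*} [TopologicalSpace X] (μ : C(X, ℝ) → ℝ) (F : Set X) : Prop :=
  ∀ φ ψ : C(X, ℝ), (∀ x ∈ F, φ x = ψ x) → μ φ = μ ψ

/-- The support of `μ`. -/
def IPMsupport {X : Type*} [TopologicalSpace X] (μ : C(X, ℝ) → ℝ) : Set X :=
  ⋂₀ {F : Set X | IsClosed F ∧ IPMSupportedOn μ F}

/-- The pushforward `I(f)`. -/
def IPMmap {X Y : Type*} [TopologicalSpace X] [TopologicalSpace Y]
    (f : C(X, Y)) (μ : C(X, ℝ) → ℝ) : C(Y, ℝ) → ℝ :=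
  fun ψ => μ (ψ.comp f)

/-- The max-plus combination `α⊙μ₁ ⊕ β⊙μ₂`. -/
def mpComb {X : Type*} [TopologicalSpace X] (α β : ℝ) (μ₁ μ₂ : C(X, ℝ) → ℝ) :
    C(X, ℝ) → ℝ :=
  fun φ => max (α + μ₁ φ) (β + μ₂ φ)

/-- The Dirac measure `δ_x`. -/
def IPMdirac {X : Type*} [TopologicalSpace X] (x : X) : C(X, ℝ) → ℝ := fun φ => φ x

/-- `μ` is a finitely supported idempotent probability measure of the form
`λ₁⊙δ_{x₁} ⊕ … ⊕ λ_s⊙δ_{x_s}` with all the points `xᵢ` in `Y`. -/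
def IsFinSuppIPM {X : Type*} [TopologicalSpace X] (Y : Set X) (μ : C(X, ℝ) → ℝ) : Prop :=
  ∃ (n : ℕ) (x : Fin (n + 1) → X) (lam : Fin (n + 1) → ℝ),
    (∀ i, x i ∈ Y) ∧
    Finset.univ.sup' Finset.univ_nonempty lam = 0 ∧
    μ = fun φ => Finset.univ.sup' Finset.univ_nonempty fun i => lam i + φ (x i)

/-- `I_β(X)`: idempotent probability measures on `βX` with support in (the image of) `X`. -/
def IBeta (X : Type*) [TopologicalSpace X] : Set (C(StoneCech X, ℝ) → ℝ) :=
  {μ | IsIPM μ ∧ IPMsupport μ ⊆ Set.range (stoneCechUnit : X → StoneCech X)}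

/-!
Given `μ`, finitely many test functions `Φ` and `δ > 0`, cover `X` by finitely many open sets on
each of which every `φ ∈ Φ` oscillates by less than `δ`, pick `yᵢ ∈ Y` in the `i`-th set, and take
a bump covering `bᵢ` subordinate to the cover. For `N` large, `gᵢ = N • (bᵢ - 1)` is a max-plus
partition of unity (`⨆ᵢ gᵢ = 0`), and `ν = ⊕ᵢ μ(gᵢ) ⊙ δ_{yᵢ}` is an idempotent probability measure
supported in `Y`. Monotonicity of `μ` applied to `gᵢ + φ(yᵢ) ≤ φ + δ` and to
`φ ≤ ⨆ᵢ (gᵢ + φ(yᵢ)) + δ` gives `|ν φ - μ φ| ≤ δ` for `φ ∈ Φ`, which is density for the topology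
of pointwise convergence.
-/

open Finset Topology

namespace IsIPM

variable {X : Type*} [TopologicalSpace X] {μ : C(X, ℝ) → ℝ}

theorem map_const (hμ : IsIPM μ) (c : ℝ) : μ (ContinuousMap.const X c) = c := hμ.1 c

theorem map_add_const (hμ : IsIPM μ) (φ : C(X, ℝ)) (c : ℝ) :
    μ (φ + ContinuousMap.const X c) = μ φ + c :=
  hμ.2.1 φ c

theorem map_sup (hμ : IsIPM μ) (φ ψ : C(X, ℝ)) : μ (φ ⊔ ψ) = max (μ φ) (μ ψ) := hμ.2.2 φ ψ

theorem map_zero (hμ : IsIPM μ) : μ 0 = 0 := hμ.map_const 0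

theorem monotone (hμ : IsIPM μ) : Monotone μ := fun φ ψ hle => by
  simpa [sup_eq_right.2 hle] using (hμ.map_sup φ ψ).ge

theorem map_finset_sup' (hμ : IsIPM μ) {ι : Type*} {s : Finset ι} (hs : s.Nonempty)
    (f : ι → C(X, ℝ)) : μ (s.sup' hs f) = s.sup' hs (μ ∘ f) :=
  apply_sup'_eq_sup'_comp hs μ hμ.map_sup

theorem nonempty (hμ : IsIPM μ) : Nonempty X := by
  by_contra hX
  have h01 : ContinuousMap.const X (0 : ℝ) = ContinuousMap.const X 1 :=
    ContinuousMap.ext fun x => (hX ⟨x⟩).elim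
  exact zero_ne_one ((hμ.map_const 0).symm.trans ((congrArg μ h01).trans (hμ.map_const 1)))

end IsIPM

section maxPlusDirac

variable {X ι : Type*} [TopologicalSpace X] [Fintype ι] [Nonempty ι]

/-- The measure `c₁ ⊙ δ_{y₁} ⊕ ⋯ ⊕ cₙ ⊙ δ_{yₙ}`. -/
def maxPlusDirac (c : ι → ℝ) (y : ι → X) : C(X, ℝ) → ℝ :=
  fun φ => univ.sup' univ_nonempty fun i => c i + φ (y i)

theorem isIPM_maxPlusDirac {c : ι → ℝ} (hc : univ.sup' univ_nonempty c = 0) (y : ι → X) :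
    IsIPM (maxPlusDirac c y) := by
  refine ⟨fun a => ?_, fun φ a => ?_, fun φ ψ => ?_⟩
  · simp [maxPlusDirac, ← sup'_add, hc]
  · simp only [maxPlusDirac, sup'_add, ContinuousMap.add_apply, ContinuousMap.const_apply,
      add_assoc]
  · refine eq_of_forall_ge_iff fun a => ?_
    simp [maxPlusDirac, ← max_add_add_left, forall_and]

theorem IPMsupport_maxPlusDirac_subset_range [T1Space X] (c : ι → ℝ) (y : ι → X) :
    IPMsupport (maxPlusDirac c y) ⊆ Set.range y :=
  Set.sInter_subset_of_mem ⟨(Set.finite_range y).isClosed, fun φ ψ h => by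
    simp only [maxPlusDirac, h _ (Set.mem_range_self _)]⟩

theorem IsIPM.abs_maxPlusDirac_sub_le {μ : C(X, ℝ) → ℝ} (hμ : IsIPM μ) (g : ι → C(X, ℝ))
    (y : ι → X) {φ : C(X, ℝ)} {δ : ℝ} (hle : ∀ i x, g i x + φ (y i) ≤ φ x + δ)
    (hge : ∀ x, ∃ i, φ x ≤ g i x + φ (y i) + δ) :
    |maxPlusDirac (fun i => μ (g i)) y φ - μ φ| ≤ δ := by
  have hupper (i : ι) : μ (g i) + φ (y i) ≤ μ φ + δ := by
    rw [← hμ.map_add_const, ← hμ.map_add_const]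
    exact hμ.monotone fun x => by simpa using hle i x
  have hlower : φ ≤ univ.sup' univ_nonempty (fun i => g i + ContinuousMap.const X (φ (y i))) +
      ContinuousMap.const X δ := ContinuousMap.le_def.2 fun x => by
    obtain ⟨i, hi⟩ := hge x
    simp only [ContinuousMap.add_apply, ContinuousMap.sup'_apply, ContinuousMap.const_apply]
    linarith [le_sup' (fun i => g i x + φ (y i)) (mem_univ i)]
  have hμφ := hμ.monotone hlower
  simp only [hμ.map_add_const, hμ.map_finset_sup', Function.comp_def] at hμφ
  exact abs_sub_le_iff.2 ⟨sub_le_iff_le_add'.2 (sup'_le _ _ fun i _ => hupper i),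
    sub_le_iff_le_add'.2 hμφ⟩

end maxPlusDirac

namespace BumpCovering

variable {X ι : Type*} [TopologicalSpace X] (b : BumpCovering ι X) {N : ℝ}

theorem smul_sub_one_apply_nonpos (hN : 0 ≤ N) (i : ι) (x : X) : (N • (b i - 1)) x ≤ 0 := by
  simpa using mul_nonpos_of_nonneg_of_nonpos hN (sub_nonpos.2 (b.le_one i x))

theorem sup'_smul_sub_one_eq_zero [Fintype ι] [Nonempty ι] (hN : 0 ≤ N) :
    univ.sup' univ_nonempty (fun i => N • (b i - 1)) = 0 := by
  refine ContinuousMap.ext fun x => ?_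
  rw [ContinuousMap.sup'_apply]
  refine le_antisymm (sup'_le _ _ fun i _ => ?_) (le_sup'_of_le _ (mem_univ (b.ind x trivial)) ?_)
  · exact b.smul_sub_one_apply_nonpos hN i x
  · simp [b.ind_apply x trivial]

end BumpCovering

section Compact

variable {X : Type*} [TopologicalSpace X] [CompactSpace X] [T2Space X] {Y : Set X}

theorem exists_bumpCovering_oscillation_lt (hY : Dense Y) (Φ : Finset C(X, ℝ)) {δ : ℝ}
    (hδ : 0 < δ) :
    ∃ (T : Finset X) (b : BumpCovering T X) (y : T → X), (∀ i, y i ∈ Y) ∧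
      ∀ i x, b i x ≠ 0 → ∀ φ ∈ Φ, |φ x - φ (y i)| < δ := by
  set U : X → Set X := fun x => {z | ∀ φ ∈ Φ, |φ z - φ x| < δ / 2}
  have hUo (x : X) : IsOpen (U x) := by
    simp only [U, Set.ofPred_forall]
    exact isOpen_biInter_finset fun φ _ => isOpen_lt (by fun_prop) continuous_const
  have hxU (x : X) : x ∈ U x := fun φ _ => by simpa using half_pos hδ
  obtain ⟨T, hT⟩ := isCompact_univ.elim_finite_subcover U hUo fun x _ => Set.mem_iUnion.2 ⟨x, hxU x⟩
  obtain ⟨b, hb⟩ := BumpCovering.exists_isSubordinate isClosed_univ (fun i : T => U i)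
    (fun i => hUo i) (by simpa [Set.iUnion_subtype] using hT)
  choose y hyU hyY using fun i : T => hY.inter_open_nonempty (U i) (hUo i) ⟨i, hxU i⟩
  refine ⟨T, b, y, hyY, fun i x hx φ hφ => ?_⟩
  have hx := abs_lt.1 (hb i (subset_tsupport _ hx) φ hφ)
  have hy := abs_lt.1 (hyU i φ hφ)
  exact abs_lt.2 ⟨by linarith, by linarith⟩

theorem IsIPM.exists_isIPM_support_subset_abs_sub_le (hY : Dense Y) {μ : C(X, ℝ) → ℝ}
    (hμ : IsIPM μ) (Φ : Finset C(X, ℝ)) {δ : ℝ} (hδ : 0 < δ) :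
    ∃ ν, IsIPM ν ∧ IPMsupport ν ⊆ Y ∧ ∀ φ ∈ Φ, |ν φ - μ φ| ≤ δ := by
  obtain ⟨x₀⟩ := hμ.nonempty
  obtain ⟨T, b, y, hyY, hosc⟩ := exists_bumpCovering_oscillation_lt hY Φ hδ
  have : Nonempty T := ⟨b.ind x₀ trivial⟩
  obtain ⟨N, hN, hφN⟩ : ∃ N, 0 ≤ N ∧ ∀ φ ∈ Φ, ∀ x x', φ x' - φ x ≤ N := by
    refine ⟨2 * ∑ φ ∈ Φ, ‖φ‖, by positivity, fun φ hφ x x' => ?_⟩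
    have := single_le_sum (fun ψ _ => norm_nonneg ψ) hφ
    linarith [(abs_le.1 (φ.norm_coe_le_norm x)).1, (abs_le.1 (φ.norm_coe_le_norm x')).2]
  set g : T → C(X, ℝ) := fun i => N • (b i - 1)
  have hg_sup : univ.sup' univ_nonempty g = 0 := b.sup'_smul_sub_one_eq_zero hN
  refine ⟨maxPlusDirac (fun i => μ (g i)) y, isIPM_maxPlusDirac ?_ y,
    (IPMsupport_maxPlusDirac_subset_range _ y).trans (Set.range_subset_iff.2 hyY),
    fun φ hφ => hμ.abs_maxPlusDirac_sub_le g y (fun i x => ?_) (fun x => ⟨b.ind x trivial, ?_⟩)⟩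
  · rw [← Function.comp_def μ g, ← hμ.map_finset_sup', hg_sup, hμ.map_zero]
  · by_cases hbx : b i x = 0
    · simp only [g, ContinuousMap.smul_apply, ContinuousMap.sub_apply, hbx,
        ContinuousMap.one_apply, smul_eq_mul]
      linarith [hφN φ hφ x (y i)]
    · linarith [(abs_lt.1 (hosc i x hbx φ hφ)).1, b.smul_sub_one_apply_nonpos hN i x]
  · have hbx := b.ind_apply x trivial
    have hφx := abs_lt.1 (hosc (b.ind x trivial) x (by simp [hbx]) φ hφ)
    simp only [g, ContinuousMap.smul_apply, ContinuousMap.sub_apply, hbx, ContinuousMap.one_apply,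
      sub_self, smul_zero, zero_add]
    linarith

end Compact

theorem mem_closure_pi_iff_dist {ι : Type*} {α : ι → Type*} [∀ i, PseudoMetricSpace (α i)]
    {S : Set (∀ i, α i)} {f : ∀ i, α i} :
    f ∈ closure S ↔ ∀ I : Set ι, I.Finite → ∀ ε > 0, ∃ g ∈ S, ∀ i ∈ I, dist (g i) (f i) < ε := by
  have hbasis := Filter.hasBasis_pi_same_index (f := fun i => 𝓝 (f i))
    (fun i => Metric.nhds_basis_ball) fun I k hI hk => by
      have : ∀ᶠ ε in 𝓝[>] (0 : ℝ), (∀ i ∈ I, ε < k i) ∧ 0 < ε :=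
        (hI.eventually_all.2 fun i hi => eventually_nhdsWithin_of_eventually_nhds
          (eventually_lt_nhds (hk i hi))).and self_mem_nhdsWithin
      obtain ⟨ε, hεk, hε⟩ := this.exists
      exact ⟨ε, hε, fun i hi => Metric.ball_subset_ball (hεk i hi).le⟩
  rw [mem_closure_iff_nhds_basis (nhds_pi (a := f) ▸ hbasis)]
  simp only [Set.mem_pi, Metric.mem_ball, Prod.forall, and_imp]
  exact ⟨fun h I hI ε hε => h I ε hI hε, fun h I ε hI hε => h I hI ε hε⟩

/-- Corollary 1: if `Y` is dense in a compact Hausdorff space `X`, then the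
measures with support contained in `Y` are dense in `I(X)`. -/
theorem ipm_support_subset_dense {X : Type*} [TopologicalSpace X] [CompactSpace X]
    [T2Space X] (Y : Set X) (hY : Dense Y) :
    {μ : C(X, ℝ) → ℝ | IsIPM μ} ⊆
      closure {μ : C(X, ℝ) → ℝ | IsIPM μ ∧ IPMsupport μ ⊆ Y} := by
  intro μ hμ
  refine mem_closure_pi_iff_dist.2 fun Φ hΦ ε hε => ?_
  obtain ⟨ν, hν, hνY, hνμ⟩ :=
    hμ.exists_isIPM_support_subset_abs_sub_le hY hΦ.toFinset (half_pos hε)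
  exact ⟨ν, ⟨hν, hνY⟩, fun φ hφ =>
    (hνμ φ (hΦ.mem_toFinset.2 hφ)).trans_lt (half_lt_self hε)⟩
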